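/- arXiv:2009.12593 — 3 statements merged into one kernel-verified Lean document; each statement's English description precedes it below -/
import Mathlib

section
/- Let R and B be graphs on the same 5-element vertex set such that R ∪ B contains no rr-bb-path. If R contains a copy of the 5-cycle C₅ and |R| ≥ 6, then |B| ≤ 4. -/
open Finset

/-- `G` is a (simple, 2-uniform) graph on the vertex set `V`: every edge is a
2-element subset of `V`. -/
def eidx : Fin 5 → Fin 5 → ℕ :=
  ![![10,0,1,2,3], ![0,10,4,5,6], ![1,4,10,7,8], ![2,5,7,10,9], ![3,6,8,9,10]]

def pk : Fin 10 → Fin 5 × Fin 5 :=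
  ![(0,1),(0,2),(0,3),(0,4),(1,2),(1,3),(1,4),(2,3),(2,4),(3,4)]

def chordbit : Fin 5 → ℕ := ![1,2,5,6,8]

def rmask : Fin 5 → ℕ := ![665+2, 665+4, 665+32, 665+64, 665+256]

def adjM (m : ℕ) (i j : Fin 5) : Bool := m.testBit (eidx i j)

def cntM (m : ℕ) : ℕ := (List.range 10).countP (fun k => m.testBit k)

def hasPB (rm bm : ℕ) : Bool :=
  (List.finRange 5).any fun i1 =>
  (List.finRange 5).any fun i2 => adjM rm i1 i2 &&
  ((List.finRange 5).any fun i3 => adjM rm i2 i3 && !(i3 == i1) &&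
  ((List.finRange 5).any fun i4 => adjM bm i3 i4 && !(i4 == i1) && !(i4 == i2) &&
  ((List.finRange 5).any fun i5 => adjM bm i4 i5 && !(i5 == i1) && !(i5 == i2) && !(i5 == i3))))

set_option maxRecDepth 100000 in
set_option maxHeartbeats 4000000 in
theorem core : ∀ c : Fin 5, ∀ m : Fin 1024, 5 ≤ cntM m → hasPB (rmask c) m = true := by
  decide

-- decided facts
theorem L1 : ∀ i j : Fin 5, i ≠ j → eidx i j < 10 := by decide
theorem L2 : ∀ i : Fin 5, eidx i i = 10 := by decide
theorem L3 : ∀ i j a b : Fin 5, i ≠ j → a ≠ b → eidx i j = eidx a b →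
    (i = a ∧ j = b) ∨ (i = b ∧ j = a) := by decide
theorem L4 : ∀ k : Fin 10, eidx (pk k).1 (pk k).2 = k.val ∧ (pk k).1 ≠ (pk k).2 := by decide
theorem L5 : ∀ c : Fin 5, ∀ k : Fin 10, (rmask c).testBit k.val = true →
    (k.val = 0 ∨ k.val = 3 ∨ k.val = 4 ∨ k.val = 7 ∨ k.val = 9 ∨ k.val = chordbit c) := by decide
theorem L6 : ∀ c : Fin 5, rmask c < 1024 := by decide
theorem L7 : ∀ i j : Fin 5, i ≠ j →
    (eidx i j = 0 → (i = 0 ∧ j = 1) ∨ (i = 1 ∧ j = 0)) ∧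
    (eidx i j = 3 → (i = 0 ∧ j = 4) ∨ (i = 4 ∧ j = 0)) ∧
    (eidx i j = 4 → (i = 1 ∧ j = 2) ∨ (i = 2 ∧ j = 1)) ∧
    (eidx i j = 7 → (i = 2 ∧ j = 3) ∨ (i = 3 ∧ j = 2)) ∧
    (eidx i j = 9 → (i = 3 ∧ j = 4) ∨ (i = 4 ∧ j = 3)) := by decide
theorem L8 : ∀ k : ℕ, k < 10 → k ≠ 0 → k ≠ 3 → k ≠ 4 → k ≠ 7 → k ≠ 9 →
    ∃ c : Fin 5, chordbit c = k := by
  intro k h h0 h3 h4 h7 h9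
  interval_cases k <;> first
    | exact ⟨0, rfl⟩ | exact ⟨1, rfl⟩ | exact ⟨2, rfl⟩ | exact ⟨3, rfl⟩ | exact ⟨4, rfl⟩
    | omega

def tob (f : Fin 10 → Bool) : ℕ :=
  Nat.bit (f 0) (Nat.bit (f 1) (Nat.bit (f 2) (Nat.bit (f 3) (Nat.bit (f 4)
    (Nat.bit (f 5) (Nat.bit (f 6) (Nat.bit (f 7) (Nat.bit (f 8) (Nat.bit (f 9) 0)))))))))

theorem tob_testBit (f : Fin 10 → Bool) : ∀ k : Fin 10, (tob f).testBit k.val = f k := by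
  intro k
  fin_cases k <;> simp [tob, Nat.testBit_bit_succ, Nat.testBit_bit_zero]

theorem bit_lt (b : Bool) {n m : ℕ} (h : n < m) : Nat.bit b n < 2 * m := by
  cases b <;> simp [Nat.bit] <;> omega

theorem tob_lt (f : Fin 10 → Bool) : tob f < 1024 := by
  have h9 : Nat.bit (f 9) 0 < 2 * 1 := bit_lt _ (by omega)
  have h8 := bit_lt (f 8) h9
  have h7 := bit_lt (f 7) h8
  have h6 := bit_lt (f 6) h7
  have h5 := bit_lt (f 5) h6
  have h4 := bit_lt (f 4) h5
  have h3 := bit_lt (f 3) h4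
  have h2 := bit_lt (f 2) h3
  have h1 := bit_lt (f 1) h2
  have h0 := bit_lt (f 0) h1
  have : tob f < 2 * (2 * (2 * (2 * (2 * (2 * (2 * (2 * (2 * (2 * 1))))))))) := h0
  omega

theorem cnt_eq (g : ℕ → Bool) :
    ((Finset.range 10).filter (fun k => g k = true)).card = (List.range 10).countP g := by
  rw [Finset.card_filter]
  simp only [show List.range 10 = [0,1,2,3,4,5,6,7,8,9] from rfl, List.countP_cons,
    List.countP_nil, Finset.sum_range_succ, Finset.sum_range_zero]
  omega

-- basic finset helpers
theorem card4 (p q r t : ℕ) : ({p,q,r,t} : Finset ℕ).card ≤ 4 := by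
  have h1 := Finset.card_insert_le p ({q,r,t} : Finset ℕ)
  have h2 := Finset.card_insert_le q ({r,t} : Finset ℕ)
  have h3 := Finset.card_insert_le r ({t} : Finset ℕ)
  have h4 : ({t} : Finset ℕ).card = 1 := Finset.card_singleton t
  omega

theorem nodup_of_card {a b c d e : ℕ} (h : ({a,b,c,d,e} : Finset ℕ).card = 5) :
    [a,b,c,d,e].Nodup := by
  have hf : ([a,b,c,d,e] : List ℕ).toFinset = ({a,b,c,d,e} : Finset ℕ) := by
    simp
  have : ([a,b,c,d,e] : List ℕ).toFinset.card = ([a,b,c,d,e] : List ℕ).length := by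
    rw [hf, h]; rfl
  rw [List.card_toFinset] at this
  exact List.dedup_eq_self.mp ((List.dedup_sublist _).eq_of_length this)

theorem card5_of_ne {a b c d e : ℕ} (hab : a ≠ b) (hac : a ≠ c) (had : a ≠ d) (hae : a ≠ e)
    (hbc : b ≠ c) (hbd : b ≠ d) (hbe : b ≠ e) (hcd : c ≠ d) (hce : c ≠ e) (hde : d ≠ e) :
    ({a,b,c,d,e} : Finset ℕ).card = 5 := by
  rw [Finset.card_insert_of_notMem (by simp [hab, hac, had, hae]),
      Finset.card_insert_of_notMem (by simp [hbc, hbd, hbe]),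
      Finset.card_insert_of_notMem (by simp [hcd, hce]),
      Finset.card_insert_of_notMem (by simp [hde]), Finset.card_singleton]

def w5 (a b c d e : ℕ) : Fin 5 → ℕ
  | 0 => a | 1 => b | 2 => c | 3 => d | 4 => e

def GraphOn (V : Finset ℕ) (G : Finset (Finset ℕ)) : Prop :=
  ∀ e ∈ G, e ⊆ V ∧ e.card = 2

/-- `R ∪ B` contains an rr-bb-path: a 4-edge path `v₁v₂v₃v₄v₅` whose first
two edges are in `R` and last two edges are in `B`. -/
def HasRRBB (R B : Finset (Finset ℕ)) : Prop :=
  ∃ v₁ v₂ v₃ v₄ v₅ : ℕ, ({v₁, v₂, v₃, v₄, v₅} : Finset ℕ).card = 5 ∧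
    ({v₁, v₂} : Finset ℕ) ∈ R ∧ ({v₂, v₃} : Finset ℕ) ∈ R ∧
    ({v₃, v₄} : Finset ℕ) ∈ B ∧ ({v₄, v₅} : Finset ℕ) ∈ B

/-- Fact 4.2: if `R, B` are graphs on the same 5-element vertex set with no
rr-bb-path, `R` contains a copy of the 5-cycle `C₅` and `|R| ≥ 6`, then
`|B| ≤ 4`. -/
theorem fact_C5 (V : Finset ℕ) (R B : Finset (Finset ℕ)) (hV : V.card = 5)
    (hR : GraphOn V R) (hB : GraphOn V B) (hP : ¬HasRRBB R B)
    (hC : ∃ v₁ v₂ v₃ v₄ v₅ : ℕ, ({v₁, v₂, v₃, v₄, v₅} : Finset ℕ).card = 5 ∧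
      ({v₁, v₂} : Finset ℕ) ∈ R ∧ ({v₂, v₃} : Finset ℕ) ∈ R ∧
      ({v₃, v₄} : Finset ℕ) ∈ R ∧ ({v₄, v₅} : Finset ℕ) ∈ R ∧
      ({v₅, v₁} : Finset ℕ) ∈ R)
    (hR6 : 6 ≤ R.card) :
    B.card ≤ 4 := by
  by_contra hB4
  push_neg at hB4
  obtain ⟨v₁, v₂, v₃, v₄, v₅, h5, h12, h23, h34, h45, h51⟩ := hC
  have hnd : ([v₁,v₂,v₃,v₄,v₅] : List ℕ).Nodup := nodup_of_card h5
  set w : Fin 5 → ℕ := fun i => [v₁,v₂,v₃,v₄,v₅].get i with hwdef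
  have hw : Function.Injective w := fun i j hij => (List.Nodup.get_inj_iff hnd).mp hij
  have hsubV : ({v₁,v₂,v₃,v₄,v₅} : Finset ℕ) ⊆ V := by
    intro x hx
    simp only [Finset.mem_insert, Finset.mem_singleton] at hx
    rcases hx with rfl|rfl|rfl|rfl|rfl
    · exact (hR _ h12).1 (by simp)
    · exact (hR _ h12).1 (by simp)
    · exact (hR _ h23).1 (by simp)
    · exact (hR _ h34).1 (by simp)
    · exact (hR _ h45).1 (by simp)
  have hVeq : V = {v₁,v₂,v₃,v₄,v₅} :=
    (Finset.eq_of_subset_of_card_le hsubV (by rw [hV, h5])).symm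
  have hmemV : ∀ x ∈ V, ∃ i : Fin 5, w i = x := by
    intro x hx
    rw [hVeq] at hx
    simp only [Finset.mem_insert, Finset.mem_singleton] at hx
    rcases hx with rfl|rfl|rfl|rfl|rfl
    exacts [⟨0, rfl⟩, ⟨1, rfl⟩, ⟨2, rfl⟩, ⟨3, rfl⟩, ⟨4, rfl⟩]
  have hdec : ∀ e : Finset ℕ, e ⊆ V → e.card = 2 →
      ∃ i j : Fin 5, i ≠ j ∧ e = {w i, w j} := by
    intro e hev hc2
    obtain ⟨x, y, hxy, rfl⟩ := Finset.card_eq_two.mp hc2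
    obtain ⟨i, rfl⟩ := hmemV x (hev (by simp))
    obtain ⟨j, rfl⟩ := hmemV y (hev (by simp))
    exact ⟨i, j, fun h => hxy (by rw [h]), rfl⟩
  -- find a chord of the cycle inside R
  have hchord : ∃ e ∈ R, e ≠ ({v₁,v₂}:Finset ℕ) ∧ e ≠ ({v₂,v₃}:Finset ℕ) ∧
      e ≠ ({v₃,v₄}:Finset ℕ) ∧ e ≠ ({v₄,v₅}:Finset ℕ) ∧ e ≠ ({v₅,v₁}:Finset ℕ) := by
    by_contra hco
    push_neg at hco
    have hRsub : R ⊆ {({v₁,v₂}:Finset ℕ), {v₂,v₃}, {v₃,v₄}, {v₄,v₅}, {v₅,v₁}} := by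
      intro e he
      simp only [Finset.mem_insert, Finset.mem_singleton]
      by_cases c1 : e = ({v₁,v₂}:Finset ℕ); · tauto
      by_cases c2 : e = ({v₂,v₃}:Finset ℕ); · tauto
      by_cases c3 : e = ({v₃,v₄}:Finset ℕ); · tauto
      by_cases c4 : e = ({v₄,v₅}:Finset ℕ); · tauto
      exact Or.inr (Or.inr (Or.inr (Or.inr (hco e he c1 c2 c3 c4))))
    have h5le : ({({v₁,v₂}:Finset ℕ), {v₂,v₃}, {v₃,v₄}, {v₄,v₅}, {v₅,v₁}} :
        Finset (Finset ℕ)).card ≤ 5 := by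
      have k1 := Finset.card_insert_le ({v₁,v₂}:Finset ℕ)
        ({{v₂,v₃}, {v₃,v₄}, {v₄,v₅}, {v₅,v₁}} : Finset (Finset ℕ))
      have k2 := Finset.card_insert_le ({v₂,v₃}:Finset ℕ)
        ({{v₃,v₄}, {v₄,v₅}, {v₅,v₁}} : Finset (Finset ℕ))
      have k3 := Finset.card_insert_le ({v₃,v₄}:Finset ℕ)
        ({{v₄,v₅}, {v₅,v₁}} : Finset (Finset ℕ))
      have k4 := Finset.card_insert_le ({v₄,v₅}:Finset ℕ) ({{v₅,v₁}} : Finset (Finset ℕ))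
      have k5 : ({{v₅,v₁}} : Finset (Finset ℕ)).card = 1 := Finset.card_singleton _
      omega
    have := Finset.card_le_card hRsub
    omega
  obtain ⟨e, heR, he1, he2, he3, he4, he5⟩ := hchord
  obtain ⟨i0, j0, hne0, hedec⟩ := hdec e (hR e heR).1 (hR e heR).2
  have hk0lt : eidx i0 j0 < 10 := L1 i0 j0 hne0
  have hL7 := L7 i0 j0 hne0
  have hc0 : eidx i0 j0 ≠ 0 := by
    intro h
    rcases hL7.1 h with ⟨rfl, rfl⟩ | ⟨rfl, rfl⟩
    · exact he1 hedec
    · exact he1 (hedec.trans (Finset.pair_comm _ _))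
  have hc3 : eidx i0 j0 ≠ 3 := by
    intro h
    rcases hL7.2.1 h with ⟨rfl, rfl⟩ | ⟨rfl, rfl⟩
    · exact he5 (hedec.trans (Finset.pair_comm _ _))
    · exact he5 hedec
  have hc4 : eidx i0 j0 ≠ 4 := by
    intro h
    rcases hL7.2.2.1 h with ⟨rfl, rfl⟩ | ⟨rfl, rfl⟩
    · exact he2 hedec
    · exact he2 (hedec.trans (Finset.pair_comm _ _))
  have hc7 : eidx i0 j0 ≠ 7 := by
    intro h
    rcases hL7.2.2.2.1 h with ⟨rfl, rfl⟩ | ⟨rfl, rfl⟩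
    · exact he3 hedec
    · exact he3 (hedec.trans (Finset.pair_comm _ _))
  have hc9 : eidx i0 j0 ≠ 9 := by
    intro h
    rcases hL7.2.2.2.2 h with ⟨rfl, rfl⟩ | ⟨rfl, rfl⟩
    · exact he4 hedec
    · exact he4 (hedec.trans (Finset.pair_comm _ _))
  obtain ⟨c, hcbit⟩ := L8 _ hk0lt hc0 hc3 hc4 hc7 hc9
  -- the blue graph as a bitmask
  set bf : Fin 10 → Bool :=
    fun k => decide (({w (pk k).1, w (pk k).2} : Finset ℕ) ∈ B) with hbfdef
  set edgeN : ℕ → Finset ℕ :=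
    fun k => ({w (pk ⟨k % 10, Nat.mod_lt _ (by norm_num)⟩).1,
               w (pk ⟨k % 10, Nat.mod_lt _ (by norm_num)⟩).2} : Finset ℕ) with hedgeN
  have hBsub : B ⊆ ((Finset.range 10).filter
      (fun k => (tob bf).testBit k = true)).image edgeN := by
    intro x hx
    obtain ⟨i, j, hij, rfl⟩ := hdec x (hB x hx).1 (hB x hx).2
    have hbfk : bf ⟨eidx i j, L1 i j hij⟩ = true := by
      apply decide_eq_true
      rcases L3 _ _ i j (L4 ⟨eidx i j, L1 i j hij⟩).2 hij
          ((L4 ⟨eidx i j, L1 i j hij⟩).1 : _ = eidx i j) with ⟨h1, h2⟩ | ⟨h1, h2⟩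
      · rw [h1, h2]; exact hx
      · rw [h1, h2, Finset.pair_comm]; exact hx
    refine Finset.mem_image.mpr ⟨eidx i j,
      Finset.mem_filter.mpr ⟨Finset.mem_range.mpr (L1 i j hij),
        (tob_testBit bf ⟨eidx i j, L1 i j hij⟩).trans hbfk⟩, ?_⟩
    have hmod : eidx i j % 10 = eidx i j := Nat.mod_eq_of_lt (L1 i j hij)
    have hk : (⟨eidx i j % 10, Nat.mod_lt _ (by norm_num)⟩ : Fin 10) =
        ⟨eidx i j, L1 i j hij⟩ := Fin.ext hmod
    simp only [hedgeN]
    rw [hk]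
    rcases L3 _ _ i j (L4 ⟨eidx i j, L1 i j hij⟩).2 hij
        ((L4 ⟨eidx i j, L1 i j hij⟩).1 : _ = eidx i j) with ⟨h1, h2⟩ | ⟨h1, h2⟩
    · rw [h1, h2]
    · rw [h1, h2, Finset.pair_comm]
  have hcnt : 5 ≤ cntM (tob bf) := by
    have k1 := Finset.card_le_card hBsub
    have k2 := Finset.card_image_le (s := (Finset.range 10).filter
      (fun k => (tob bf).testBit k = true)) (f := edgeN)
    have k3 : ((Finset.range 10).filter (fun k => (tob bf).testBit k = true)).card
        = cntM (tob bf) := cnt_eq _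
    omega
  have hcore := core c ⟨tob bf, tob_lt bf⟩ hcnt
  -- adjacency facts
  have hne : ∀ m : ℕ, m < 1024 → ∀ i j : Fin 5, adjM m i j = true → i ≠ j := by
    intro m hm i j ha heq
    subst heq
    have h10 : m.testBit 10 = false :=
      Nat.testBit_lt_two_pow (by omega : m < 2 ^ 10)
    simp only [adjM, L2] at ha
    rw [h10] at ha
    exact Bool.false_ne_true ha
  have hrm : ∀ i j : Fin 5, adjM (rmask c) i j = true → ({w i, w j} : Finset ℕ) ∈ R := by
    intro i j ha
    have hij : i ≠ j := hne _ (L6 c) i j ha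
    simp only [adjM] at ha
    have h5' := L5 c ⟨eidx i j, L1 i j hij⟩ ha
    rcases h5' with h|h|h|h|h|h
    · rcases (L7 i j hij).1 h with ⟨rfl, rfl⟩ | ⟨rfl, rfl⟩
      · exact h12
      · rw [Finset.pair_comm]; exact h12
    · rcases (L7 i j hij).2.1 h with ⟨rfl, rfl⟩ | ⟨rfl, rfl⟩
      · rw [Finset.pair_comm]; exact h51
      · exact h51
    · rcases (L7 i j hij).2.2.1 h with ⟨rfl, rfl⟩ | ⟨rfl, rfl⟩
      · exact h23
      · rw [Finset.pair_comm]; exact h23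
    · rcases (L7 i j hij).2.2.2.1 h with ⟨rfl, rfl⟩ | ⟨rfl, rfl⟩
      · exact h34
      · rw [Finset.pair_comm]; exact h34
    · rcases (L7 i j hij).2.2.2.2 h with ⟨rfl, rfl⟩ | ⟨rfl, rfl⟩
      · exact h45
      · rw [Finset.pair_comm]; exact h45
    · -- chord case
      have hee : eidx i j = eidx i0 j0 := by
        rw [← hcbit]; exact h
      rcases L3 i j i0 j0 hij hne0 hee with ⟨rfl, rfl⟩ | ⟨rfl, rfl⟩
      · rw [← hedec]; exact heR
      · rw [Finset.pair_comm, ← hedec]; exact heR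
  have hbm : ∀ i j : Fin 5, adjM (tob bf) i j = true → ({w i, w j} : Finset ℕ) ∈ B := by
    intro i j ha
    have hij : i ≠ j := hne _ (tob_lt bf) i j ha
    simp only [adjM] at ha
    have hb : bf ⟨eidx i j, L1 i j hij⟩ = true :=
      (tob_testBit bf ⟨eidx i j, L1 i j hij⟩).symm.trans ha
    have hmem := of_decide_eq_true hb
    rcases L3 _ _ i j (L4 ⟨eidx i j, L1 i j hij⟩).2 hij
        ((L4 ⟨eidx i j, L1 i j hij⟩).1 : _ = eidx i j) with ⟨h1, h2⟩ | ⟨h1, h2⟩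
    · rw [h1, h2] at hmem; exact hmem
    · rw [h1, h2] at hmem; rw [Finset.pair_comm]; exact hmem
  -- unpack the path
  simp only [hasPB, List.any_eq_true, Bool.and_eq_true, Bool.not_eq_true',
    beq_eq_false_iff_ne, ne_eq, List.mem_finRange, true_and] at hcore
  obtain ⟨i1, i2, ha12, i3, ⟨ha23, n31⟩, i4, ⟨⟨ha34, n41⟩, n42⟩,
    i5, ⟨⟨ha45, n51⟩, n52⟩, n53⟩ := hcore
  have n12 : i1 ≠ i2 := hne _ (L6 c) _ _ ha12
  have n23 : i2 ≠ i3 := hne _ (L6 c) _ _ ha23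
  have n34 : i3 ≠ i4 := hne _ (tob_lt bf) _ _ ha34
  have n45 : i4 ≠ i5 := hne _ (tob_lt bf) _ _ ha45
  refine hP ⟨w i1, w i2, w i3, w i4, w i5, ?_, hrm _ _ ha12, hrm _ _ ha23,
    hbm _ _ ha34, hbm _ _ ha45⟩
  exact card5_of_ne (hw.ne n12) (hw.ne (Ne.symm n31)) (hw.ne (Ne.symm n41))
    (hw.ne (Ne.symm n51)) (hw.ne n23) (hw.ne (Ne.symm n42)) (hw.ne (Ne.symm n52))
    (hw.ne n34) (hw.ne (Ne.symm n53)) (hw.ne n45)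
end

section
/- Every connected 𝒫₄-free 3-graph H has matching number ν(H) ≤ 3, i.e., H does not contain four pairwise disjoint edges. -/
open Finset

/-- `H` is a 3-graph on the vertex set `V`: every edge is a 3-element subset of `V`. -/
def ThreeGraphOn (V : Finset ℕ) (H : Finset (Finset ℕ)) : Prop :=
  ∀ e ∈ H, e ⊆ V ∧ e.card = 3

/-- Four edges form a 3-uniform minimal 4-path: `aᵢ ∩ aⱼ ≠ ∅ ↔ |i - j| ≤ 1`. -/
def IsMinPath4 (a₀ a₁ a₂ a₃ : Finset ℕ) : Prop :=
  (a₀ ∩ a₁).Nonempty ∧ (a₁ ∩ a₂).Nonempty ∧ (a₂ ∩ a₃).Nonempty ∧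
    a₀ ∩ a₂ = ∅ ∧ a₀ ∩ a₃ = ∅ ∧ a₁ ∩ a₃ = ∅

/-- `H` contains no minimal 4-path. -/
def P4Free (H : Finset (Finset ℕ)) : Prop :=
  ¬∃ a₀ ∈ H, ∃ a₁ ∈ H, ∃ a₂ ∈ H, ∃ a₃ ∈ H, IsMinPath4 a₀ a₁ a₂ a₃

/-- `H` is connected on `V`: every partition of `V` into two nonempty parts
is crossed by an edge of `H`. -/
def ConnectedHG (V : Finset ℕ) (H : Finset (Finset ℕ)) : Prop :=
  ∀ U W : Finset ℕ, U ∪ W = V → Disjoint U W → U.Nonempty → W.Nonempty →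
    ∃ e ∈ H, (e ∩ U).Nonempty ∧ (e ∩ W).Nonempty

private lemma ne_comm' {s t : Finset ℕ} (h : (s ∩ t).Nonempty) : (t ∩ s).Nonempty := by
  rwa [inter_comm]

private lemma ee_comm {s t : Finset ℕ} (h : s ∩ t = ∅) : t ∩ s = ∅ := by
  rwa [inter_comm]

/-- A 3-set meeting three pairwise disjoint sets is contained in their union. -/
private lemma meets3_subset {x A B C : Finset ℕ} (hx : x.card = 3)
    (hAB : A ∩ B = ∅) (hAC : A ∩ C = ∅) (hBC : B ∩ C = ∅)
    (hA : (x ∩ A).Nonempty) (hB : (x ∩ B).Nonempty) (hC : (x ∩ C).Nonempty) :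
    x ⊆ A ∪ B ∪ C := by
  obtain ⟨a, ha⟩ := hA; obtain ⟨b, hb⟩ := hB; obtain ⟨c, hc⟩ := hC
  rw [mem_inter] at ha hb hc
  have hab : a ≠ b := by
    rintro rfl
    exact absurd (mem_inter.2 ⟨ha.2, hb.2⟩) (by simp [hAB])
  have hac : a ≠ c := by
    rintro rfl
    exact absurd (mem_inter.2 ⟨ha.2, hc.2⟩) (by simp [hAC])
  have hbc : b ≠ c := by
    rintro rfl
    exact absurd (mem_inter.2 ⟨hb.2, hc.2⟩) (by simp [hBC])
  have hsub : ({a, b, c} : Finset ℕ) ⊆ x := by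
    intro v hv
    simp only [mem_insert, mem_singleton] at hv
    rcases hv with rfl | rfl | rfl
    · exact ha.1
    · exact hb.1
    · exact hc.1
  have hcard : ({a, b, c} : Finset ℕ).card = 3 := by
    rw [card_insert_of_notMem (by simp [hab, hac]),
      card_insert_of_notMem (by simp [hbc]), card_singleton]
  have hx2 : ({a, b, c} : Finset ℕ) = x :=
    eq_of_subset_of_card_le hsub (by rw [hx, hcard])
  rw [← hx2]
  intro v hv
  simp only [mem_insert, mem_singleton] at hv
  rcases hv with rfl | rfl | rfl
  · exact mem_union_left _ (mem_union_left _ ha.2)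
  · exact mem_union_left _ (mem_union_right _ hb.2)
  · exact mem_union_right _ hc.2

/-- A 3-set cannot meet four pairwise disjoint sets. -/
private lemma not_meet_four {x A B C D : Finset ℕ} (hx : x.card = 3)
    (hAB : A ∩ B = ∅) (hAC : A ∩ C = ∅) (hAD : A ∩ D = ∅)
    (hBC : B ∩ C = ∅) (hBD : B ∩ D = ∅) (hCD : C ∩ D = ∅)
    (hA : (x ∩ A).Nonempty) (hB : (x ∩ B).Nonempty) (hC : (x ∩ C).Nonempty)
    (hD : (x ∩ D).Nonempty) : False := by
  have hsub := meets3_subset hx hAB hAC hBC hA hB hC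
  obtain ⟨v, hv⟩ := hD
  rw [mem_inter] at hv
  have := hsub hv.1
  rw [mem_union, mem_union] at this
  rcases this with (hvA | hvB) | hvC
  · exact absurd (mem_inter.2 ⟨hvA, hv.2⟩) (by simp [hAD])
  · exact absurd (mem_inter.2 ⟨hvB, hv.2⟩) (by simp [hBD])
  · exact absurd (mem_inter.2 ⟨hvC, hv.2⟩) (by simp [hCD])

/-- In a connected hypergraph, any two edges are linked by a chain of
pairwise-intersecting edges. -/
private lemma reach_all (V : Finset ℕ) (H : Finset (Finset ℕ)) (hH : ThreeGraphOn V H)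
    (hconn : ConnectedHG V H) {a b : Finset ℕ} (ha : a ∈ H) (hb : b ∈ H) :
    Relation.ReflTransGen (fun c d => d ∈ H ∧ (c ∩ d).Nonempty) a b := by
  classical
  by_contra hnot
  set R := fun c d : Finset ℕ => d ∈ H ∧ (c ∩ d).Nonempty with hR
  set U := V.filter (fun v => ∃ x ∈ H, Relation.ReflTransGen R a x ∧ v ∈ x) with hU
  have hUsub : ∀ {x}, x ∈ H → Relation.ReflTransGen R a x → x ⊆ U := by
    intro x hx hro v hv
    exact mem_filter.2 ⟨(hH x hx).1 hv, x, hx, hro, hv⟩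
  have haU : a ⊆ U := hUsub ha .refl
  have hane : a.Nonempty := card_pos.1 (by rw [(hH a ha).2]; norm_num)
  have hbW : b ⊆ V \ U := by
    intro v hv
    refine mem_sdiff.2 ⟨(hH b hb).1 hv, ?_⟩
    intro hvU
    obtain ⟨x, hx, hrx, hvx⟩ := (mem_filter.1 hvU).2
    exact hnot (hrx.tail ⟨hb, ⟨v, mem_inter.2 ⟨hvx, hv⟩⟩⟩)
  have hbne : b.Nonempty := card_pos.1 (by rw [(hH b hb).2]; norm_num)
  obtain ⟨e, he, ⟨u, hu⟩, ⟨w, hw⟩⟩ := hconn U (V \ U)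
    (union_sdiff_of_subset (filter_subset _ _)) disjoint_sdiff
    ⟨_, haU hane.choose_spec⟩ ⟨_, hbW hbne.choose_spec⟩
  rw [mem_inter] at hu hw
  obtain ⟨x, hx, hrx, hux⟩ := (mem_filter.1 hu.2).2
  have hre : Relation.ReflTransGen R a e := hrx.tail ⟨he, ⟨u, mem_inter.2 ⟨hux, hu.1⟩⟩⟩
  exact (mem_sdiff.1 hw.2).2 (hUsub he hre hw.1)

/-- Key lemma: in a `P4`-free hypergraph, two disjoint linked edges have a
common neighbour. -/
private lemma common_of_reach (H : Finset (Finset ℕ)) (hfree : P4Free H)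
    (h3 : ∀ e ∈ H, e.card = 3) {a b : Finset ℕ} (hb : b ∈ H)
    (hr : Relation.ReflTransGen (fun c d => d ∈ H ∧ (c ∩ d).Nonempty) a b) :
    a ∈ H → a ∩ b = ∅ → ∃ c ∈ H, (c ∩ a).Nonempty ∧ (c ∩ b).Nonempty := by
  refine Relation.ReflTransGen.head_induction_on hr ?_ ?_
  · intro _ hbb
    exfalso
    have hc := h3 b hb
    rw [inter_self] at hbb
    rw [hbb] at hc
    simp at hc
  · intro x c hxc' hcb ih hx hxb
    obtain ⟨hcH, hxcne⟩ := hxc'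
    rcases (c ∩ b).eq_empty_or_nonempty with hcb0 | hcb1
    · obtain ⟨d, hdH, hdc, hdb⟩ := ih hcH hcb0
      rcases (d ∩ x).eq_empty_or_nonempty with hdx0 | hdx1
      · exact absurd ⟨x, hx, c, hcH, d, hdH, b, hb,
          hxcne, ne_comm' hdc, hdb, ee_comm hdx0, hxb, hcb0⟩ hfree
      · exact ⟨d, hdH, hdx1, hdb⟩
    · exact ⟨c, hcH, ne_comm' hxcne, hcb1⟩

/-- Case 2 of the main argument, with symmetry in `p, q` broken:
`f` meets `p, q`, misses `r, s`; `g` meets `r, s`, misses `p`. -/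
private lemma case2 (H : Finset (Finset ℕ)) (hfree : P4Free H)
    (h3 : ∀ e ∈ H, e.card = 3)
    (hcom : ∀ a b, a ∈ H → b ∈ H → a ∩ b = ∅ →
      ∃ c ∈ H, (c ∩ a).Nonempty ∧ (c ∩ b).Nonempty)
    {p q r s f g : Finset ℕ}
    (hp : p ∈ H) (hq : q ∈ H) (hr : r ∈ H) (hs : s ∈ H) (hf : f ∈ H) (hg : g ∈ H)
    (dpq : p ∩ q = ∅) (dpr : p ∩ r = ∅) (dps : p ∩ s = ∅)
    (dqr : q ∩ r = ∅) (dqs : q ∩ s = ∅) (drs : r ∩ s = ∅)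
    (hfp : (f ∩ p).Nonempty) (hfq : (f ∩ q).Nonempty)
    (hfr : f ∩ r = ∅) (hfs : f ∩ s = ∅)
    (hgr : (g ∩ r).Nonempty) (hgs : (g ∩ s).Nonempty)
    (hgp : g ∩ p = ∅) : False := by
  rcases (g ∩ f).eq_empty_or_nonempty with hgf0 | hgf1
  · -- g disjoint from f: take h common neighbour of f and g
    obtain ⟨h, hhH, hhf, hhg⟩ := hcom f g hf hg (ee_comm hgf0)
    rcases (h ∩ p).eq_empty_or_nonempty with hp0 | hp1
    · -- path p f h g
      exact hfree ⟨p, hp, f, hf, h, hhH, g, hg,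
        ne_comm' hfp, ne_comm' hhf, hhg, ee_comm hp0, ee_comm hgp, ee_comm hgf0⟩
    rcases (h ∩ r).eq_empty_or_nonempty with hr0 | hr1
    · -- path f h g r
      exact hfree ⟨f, hf, h, hhH, g, hg, r, hr,
        ne_comm' hhf, hhg, hgr, ee_comm hgf0, hfr, hr0⟩
    rcases (h ∩ s).eq_empty_or_nonempty with hs0 | hs1
    · -- path f h g s
      exact hfree ⟨f, hf, h, hhH, g, hg, s, hs,
        ne_comm' hhf, hhg, hgs, ee_comm hgf0, hfs, hs0⟩
    · -- h meets p, r, s, hence misses q; path q f h r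
      have hq0 : h ∩ q = ∅ := by
        rcases (h ∩ q).eq_empty_or_nonempty with h0 | h1
        · exact h0
        · exact absurd (not_meet_four (h3 h hhH) dpr dps dpq drs (ee_comm dqr)
            (ee_comm dqs) hp1 hr1 hs1 h1) (by simp)
      exact hfree ⟨q, hq, f, hf, h, hhH, r, hr,
        ne_comm' hfq, ne_comm' hhf, hr1, ee_comm hq0, dqr, hfr⟩
  · -- g meets f: path p f g r
    exact hfree ⟨p, hp, f, hf, g, hg, r, hr,
      ne_comm' hfp, ne_comm' hgf1, hgr, ee_comm hgp, dpr, hfr⟩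

/-- Main case analysis: `f` meets `p, q` and misses `s`. -/
private lemma caseA (H : Finset (Finset ℕ)) (hfree : P4Free H)
    (h3 : ∀ e ∈ H, e.card = 3)
    (hcom : ∀ a b, a ∈ H → b ∈ H → a ∩ b = ∅ →
      ∃ c ∈ H, (c ∩ a).Nonempty ∧ (c ∩ b).Nonempty)
    {p q r s f : Finset ℕ}
    (hp : p ∈ H) (hq : q ∈ H) (hr : r ∈ H) (hs : s ∈ H) (hf : f ∈ H)
    (dpq : p ∩ q = ∅) (dpr : p ∩ r = ∅) (dps : p ∩ s = ∅)
    (dqr : q ∩ r = ∅) (dqs : q ∩ s = ∅) (drs : r ∩ s = ∅)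
    (hfp : (f ∩ p).Nonempty) (hfq : (f ∩ q).Nonempty)
    (hfs : f ∩ s = ∅) : False := by
  rcases (f ∩ r).eq_empty_or_nonempty with hfr0 | hfr1
  · -- f misses r too; take g common neighbour of r and s
    obtain ⟨g, hgH, hgr, hgs⟩ := hcom r s hr hs drs
    rcases (g ∩ p).eq_empty_or_nonempty with hgp0 | hgp1
    · exact case2 H hfree h3 hcom hp hq hr hs hf hgH dpq dpr dps dqr dqs drs
        hfp hfq hfr0 hfs hgr hgs hgp0
    · have hgq0 : g ∩ q = ∅ := by
        rcases (g ∩ q).eq_empty_or_nonempty with h0 | h1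
        · exact h0
        · exact absurd (not_meet_four (h3 g hgH) dpq dpr dps dqr dqs drs
            hgp1 h1 hgr hgs) (by simp)
      exact case2 H hfree h3 hcom hq hp hr hs hf hgH (ee_comm dpq) dqr dqs dpr dps drs
        hfq hfp hfr0 hfs hgr hgs hgq0
  · -- f meets p, q, r; take h common neighbour of f and s
    obtain ⟨h, hhH, hhf, hhs⟩ := hcom f s hf hs hfs
    rcases (h ∩ p).eq_empty_or_nonempty with hp0 | hp1
    · -- path p f h s
      exact hfree ⟨p, hp, f, hf, h, hhH, s, hs,
        ne_comm' hfp, ne_comm' hhf, hhs, ee_comm hp0, dps, hfs⟩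
    rcases (h ∩ q).eq_empty_or_nonempty with hq0 | hq1
    · -- path q f h s
      exact hfree ⟨q, hq, f, hf, h, hhH, s, hs,
        ne_comm' hfq, ne_comm' hhf, hhs, ee_comm hq0, dqs, hfs⟩
    rcases (h ∩ r).eq_empty_or_nonempty with hr0 | hr1
    · -- path r f h s
      exact hfree ⟨r, hr, f, hf, h, hhH, s, hs,
        ne_comm' hfr1, ne_comm' hhf, hhs, ee_comm hr0, drs, hfs⟩
    · -- h meets p, q, r, s: impossible
      exact not_meet_four (h3 h hhH) dpq dpr dps dqr dqs drs hp1 hq1 hr1 hhs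

/-- Lemma 5.2: every connected `𝒫₄`-free 3-graph has matching number at most
3, i.e. it contains no four pairwise disjoint edges. -/
theorem matching_number_le_three (V : Finset ℕ) (H : Finset (Finset ℕ))
    (hH : ThreeGraphOn V H) (hconn : ConnectedHG V H) (hfree : P4Free H) :
    ¬∃ e₁ ∈ H, ∃ e₂ ∈ H, ∃ e₃ ∈ H, ∃ e₄ ∈ H,
      e₁ ∩ e₂ = ∅ ∧ e₁ ∩ e₃ = ∅ ∧ e₁ ∩ e₄ = ∅ ∧
      e₂ ∩ e₃ = ∅ ∧ e₂ ∩ e₄ = ∅ ∧ e₃ ∩ e₄ = ∅ := by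
  rintro ⟨e₁, h1, e₂, h2, e₃, h3', e₄, h4, d12, d13, d14, d23, d24, d34⟩
  have h3 : ∀ e ∈ H, e.card = 3 := fun e he => (hH e he).2
  have hcom : ∀ a b, a ∈ H → b ∈ H → a ∩ b = ∅ →
      ∃ c ∈ H, (c ∩ a).Nonempty ∧ (c ∩ b).Nonempty := by
    intro a b ha hb hab
    exact common_of_reach H hfree h3 hb (reach_all V H hH hconn ha hb) ha hab
  obtain ⟨f, hfH, hf1, hf2⟩ := hcom e₁ e₂ h1 h2 d12
  rcases (f ∩ e₄).eq_empty_or_nonempty with hf40 | hf41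
  · exact caseA H hfree h3 hcom h1 h2 h3' h4 hfH d12 d13 d14 d23 d24 d34 hf1 hf2 hf40
  · have hf30 : f ∩ e₃ = ∅ := by
      rcases (f ∩ e₃).eq_empty_or_nonempty with h0 | h1'
      · exact h0
      · exact absurd (not_meet_four (h3 f hfH) d12 d13 d14 d23 d24 d34
          hf1 hf2 h1' hf41) (by simp)
    exact caseA H hfree h3 hcom h1 h2 h4 h3' hfH d12 d14 d13 d24 d23 (ee_comm d34)
      hf1 hf2 hf30
end

section
/- Every connected 𝒫₄-free 3-graph H with matching number ν(H) = 2 admits a partition of its edge set into three pairwise edge-disjoint 3-graphs H = F₁ ⊍ F₂ ⊍ F₁₂ such that: (i) the sets of non-isolated vertices of F₁ and F₂ are disjoint; (ii) F₁ and F₂ are nonempty intersecting families; (iii) F₁₂ is nonempty; and (iv) the pair (F₁ ∪ F₂, F₁₂) is cross-intersecting. -/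
open Finset

/-- `H` contains three pairwise disjoint edges. -/
def HasM3 (H : Finset (Finset ℕ)) : Prop :=
  ∃ e₁ ∈ H, ∃ e₂ ∈ H, ∃ e₃ ∈ H, e₁ ∩ e₂ = ∅ ∧ e₁ ∩ e₃ = ∅ ∧ e₂ ∩ e₃ = ∅

/-- Lemma 5.3: every connected `𝒫₄`-free 3-graph `H` with matching number 2
splits into three pairwise edge-disjoint parts `H = F₁ ⊍ F₂ ⊍ F₁₂` such that
(i) the supports of `F₁` and `F₂` are disjoint, (ii) `F₁`, `F₂` are nonempty
intersecting families, (iii) `F₁₂ ≠ ∅`, and (iv) the pair `(F₁ ∪ F₂, F₁₂)` is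
cross-intersecting. -/
theorem structure_nu2 (V : Finset ℕ) (H : Finset (Finset ℕ))
    (hH : ThreeGraphOn V H) (hconn : ConnectedHG V H) (hfree : P4Free H)
    (hM2 : ∃ e₁ ∈ H, ∃ e₂ ∈ H, e₁ ∩ e₂ = ∅) (hM3 : ¬HasM3 H) :
    ∃ F₁ F₂ F₁₂ : Finset (Finset ℕ),
      H = F₁ ∪ F₂ ∪ F₁₂ ∧
      Disjoint F₁ F₂ ∧ Disjoint F₁ F₁₂ ∧ Disjoint F₂ F₁₂ ∧
      Disjoint (F₁.sup id) (F₂.sup id) ∧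
      F₁.Nonempty ∧ F₂.Nonempty ∧
      (∀ e ∈ F₁, ∀ f ∈ F₁, (e ∩ f).Nonempty) ∧
      (∀ e ∈ F₂, ∀ f ∈ F₂, (e ∩ f).Nonempty) ∧
      F₁₂.Nonempty ∧
      (∀ e ∈ F₁ ∪ F₂, ∀ f ∈ F₁₂, (e ∩ f).Nonempty) := by
  classical
  obtain ⟨a, ha, b, hb, hab⟩ := hM2
  set F₁ := H.filter (fun e => e ∩ b = ∅) with hF₁
  set F₂ := H.filter (fun e => e ∩ a = ∅) with hF₂
  set F₁₂ := H.filter (fun e => (e ∩ a).Nonempty ∧ (e ∩ b).Nonempty) with hF₁₂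
  have haF₁ : a ∈ F₁ := Finset.mem_filter.2 ⟨ha, hab⟩
  have hba : b ∩ a = ∅ := by rw [Finset.inter_comm]; exact hab
  have hbF₂ : b ∈ F₂ := Finset.mem_filter.2 ⟨hb, hba⟩
  -- no edge is disjoint from both a and b
  have hnoboth : ∀ e ∈ H, e ∩ a = ∅ → e ∩ b = ∅ → False := by
    intro e he h1 h2
    exact hM3 ⟨a, ha, b, hb, e, he, hab, by rw [Finset.inter_comm]; exact h1,
      by rw [Finset.inter_comm]; exact h2⟩
  -- F₁ intersecting
  have hint1 : ∀ e ∈ F₁, ∀ f ∈ F₁, (e ∩ f).Nonempty := by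
    intro e he f hf
    obtain ⟨he, he2⟩ := Finset.mem_filter.1 he
    obtain ⟨hf, hf2⟩ := Finset.mem_filter.1 hf
    rw [Finset.nonempty_iff_ne_empty]
    intro hef
    exact hM3 ⟨e, he, f, hf, b, hb, hef, he2, hf2⟩
  -- F₂ intersecting
  have hint2 : ∀ e ∈ F₂, ∀ f ∈ F₂, (e ∩ f).Nonempty := by
    intro e he f hf
    obtain ⟨he, he2⟩ := Finset.mem_filter.1 he
    obtain ⟨hf, hf2⟩ := Finset.mem_filter.1 hf
    rw [Finset.nonempty_iff_ne_empty]
    intro hef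
    exact hM3 ⟨e, he, f, hf, a, ha, hef, he2, hf2⟩
  -- edges of F₁ and F₂ are disjoint (key, via P4-freeness)
  have hkey : ∀ f ∈ F₁, ∀ g ∈ F₂, f ∩ g = ∅ := by
    intro f hf g hg
    by_contra hfg
    rw [← Ne, ← Finset.nonempty_iff_ne_empty] at hfg
    obtain ⟨hfH, hf2⟩ := Finset.mem_filter.1 hf
    obtain ⟨hgH, hg2⟩ := Finset.mem_filter.1 hg
    refine hfree ⟨a, ha, f, hfH, g, hgH, b, hb, hint1 a haF₁ f hf, hfg,
      hint2 g hg b hbF₂, ?_, hab, hf2⟩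
    rw [Finset.inter_comm]; exact hg2
  have hsup : Disjoint (F₁.sup id) (F₂.sup id) := by
    rw [Finset.disjoint_left]
    intro v hv1 hv2
    obtain ⟨f, hf, hvf⟩ := Finset.mem_sup.1 hv1
    obtain ⟨g, hg, hvg⟩ := Finset.mem_sup.1 hv2
    have := hkey f hf g hg
    have : v ∈ f ∩ g := Finset.mem_inter.2 ⟨hvf, hvg⟩
    rw [hkey f hf g hg] at this
    exact absurd this (Finset.notMem_empty v)
  -- partition
  have hcover : H = F₁ ∪ F₂ ∪ F₁₂ := by
    apply Finset.Subset.antisymm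
    · intro e he
      rcases eq_or_ne (e ∩ b) ∅ with h2 | h2
      · exact Finset.mem_union.2 (Or.inl (Finset.mem_union.2 (Or.inl
          (Finset.mem_filter.2 ⟨he, h2⟩))))
      rcases eq_or_ne (e ∩ a) ∅ with h1 | h1
      · exact Finset.mem_union.2 (Or.inl (Finset.mem_union.2 (Or.inr
          (Finset.mem_filter.2 ⟨he, h1⟩))))
      · exact Finset.mem_union.2 (Or.inr (Finset.mem_filter.2
          ⟨he, Finset.nonempty_iff_ne_empty.2 h1, Finset.nonempty_iff_ne_empty.2 h2⟩))
    · intro e he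
      rcases Finset.mem_union.1 he with h | h
      · rcases Finset.mem_union.1 h with h | h
        · exact (Finset.mem_filter.1 h).1
        · exact (Finset.mem_filter.1 h).1
      · exact (Finset.mem_filter.1 h).1
  have hd12 : Disjoint F₁ F₂ := by
    rw [Finset.disjoint_left]
    intro e h1 h2
    exact hnoboth e (Finset.mem_filter.1 h1).1 (Finset.mem_filter.1 h2).2
      (Finset.mem_filter.1 h1).2
  have hd1 : Disjoint F₁ F₁₂ := by
    rw [Finset.disjoint_left]
    intro e h1 h2
    have := (Finset.mem_filter.1 h2).2.2
    rw [(Finset.mem_filter.1 h1).2] at this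
    exact Finset.not_nonempty_empty this
  have hd2 : Disjoint F₂ F₁₂ := by
    rw [Finset.disjoint_left]
    intro e h1 h2
    have := (Finset.mem_filter.1 h2).2.1
    rw [(Finset.mem_filter.1 h1).2] at this
    exact Finset.not_nonempty_empty this
  -- cross-intersecting
  have hcross : ∀ e ∈ F₁ ∪ F₂, ∀ f ∈ F₁₂, (e ∩ f).Nonempty := by
    intro e he f hf
    obtain ⟨hfH, hfa, hfb⟩ := Finset.mem_filter.1 hf
    rw [Finset.nonempty_iff_ne_empty]
    intro hef
    rcases Finset.mem_union.1 he with h | h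
    · obtain ⟨heH, he2⟩ := Finset.mem_filter.1 h
      refine hfree ⟨e, heH, a, ha, f, hfH, b, hb, hint1 e h a haF₁,
        by rw [Finset.inter_comm]; exact hfa, hfb, hef, he2, hab⟩
    · obtain ⟨heH, he2⟩ := Finset.mem_filter.1 h
      refine hfree ⟨e, heH, b, hb, f, hfH, a, ha, hint2 e h b hbF₂,
        by rw [Finset.inter_comm]; exact hfb, hfa, hef, he2, hba⟩
  -- F₁₂ nonempty, via connectivity
  have h12ne : F₁₂.Nonempty := by
    rw [Finset.nonempty_iff_ne_empty]
    intro hempty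
    have hU : F₁.sup id ⊆ V := by
      intro v hv
      obtain ⟨f, hf, hvf⟩ := Finset.mem_sup.1 hv
      exact (hH f (Finset.mem_filter.1 hf).1).1 hvf
    obtain ⟨e', he', hx1, hx2⟩ := hconn (F₁.sup id) (V \ F₁.sup id)
      (Finset.union_sdiff_of_subset hU) Finset.disjoint_sdiff
      (by
        obtain ⟨v, hv⟩ := Finset.card_pos.1 (by rw [(hH a ha).2]; norm_num)
        exact ⟨v, Finset.mem_sup.2 ⟨a, haF₁, hv⟩⟩)
      (by
        obtain ⟨v, hv⟩ := Finset.card_pos.1 (by rw [(hH b hb).2]; norm_num)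
        refine ⟨v, Finset.mem_sdiff.2 ⟨(hH b hb).1 hv, ?_⟩⟩
        intro hvU
        obtain ⟨f, hf, hvf⟩ := Finset.mem_sup.1 hvU
        have : v ∈ f ∩ b := Finset.mem_inter.2 ⟨hvf, hv⟩
        rw [(Finset.mem_filter.1 hf).2] at this
        exact Finset.notMem_empty v this)
    have he'' : e' ∈ F₁ ∪ F₂ := by
      have := hcover ▸ he'
      rw [hempty, Finset.union_empty] at this
      exact this
    rcases Finset.mem_union.1 he'' with h | h
    · obtain ⟨v, hv⟩ := hx2
      obtain ⟨hve, hvW⟩ := Finset.mem_inter.1 hv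
      exact (Finset.mem_sdiff.1 hvW).2 (Finset.mem_sup.2 ⟨e', h, hve⟩)
    · obtain ⟨v, hv⟩ := hx1
      obtain ⟨hve, hvU⟩ := Finset.mem_inter.1 hv
      obtain ⟨f, hf, hvf⟩ := Finset.mem_sup.1 hvU
      have : v ∈ f ∩ e' := Finset.mem_inter.2 ⟨hvf, hve⟩
      rw [hkey f hf e' h] at this
      exact Finset.notMem_empty v this
  exact ⟨F₁, F₂, F₁₂, hcover, hd12, hd1, hd2, hsup, ⟨a, haF₁⟩, ⟨b, hbF₂⟩,
    hint1, hint2, h12ne, hcross⟩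
end
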